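/- arXiv:1506.04171 — 3 statements merged into one kernel-verified Lean document; each statement's English description precedes it below -/
import Mathlib

section
/- For every natural number n there exists a totally separable packing of n unit circles in the plane with exactly ⌊2(n − √n)⌋ tangencies. -/
open EuclideanSpace Metric Finset
open scoped Classical

noncomputable section

/-- The tangent hyperplane to a pair of touching unit spheres centered at `x` and `y`:
the hyperplane through the midpoint `(x+y)/2` perpendicular to `x - y`. -/
def tangentHyp {d : ℕ} (x y : EuclideanSpace ℝ (Fin d)) : Set (EuclideanSpace ℝ (Fin d)) :=
  {p | (inner ℝ (p - midpoint ℝ x y) (x - y) : ℝ) = 0}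

/-- A set of centers forms a packing of unit spheres: pairwise distances are at least 2. -/
def IsPacking {d : ℕ} (S : Set (EuclideanSpace ℝ (Fin d))) : Prop :=
  S.Pairwise fun x y => 2 ≤ dist x y

/-- A packing is totally separable if every tangent hyperplane of a touching pair avoids the
open unit ball about every center. -/
def TotallySeparable {d : ℕ} (S : Set (EuclideanSpace ℝ (Fin d))) : Prop :=
  ∀ x ∈ S, ∀ y ∈ S, dist x y = 2 → ∀ z ∈ S, tangentHyp x y ∩ ball z 1 = ∅

/-- The number of tangencies (unordered pairs of centers at distance exactly 2)
of a finite packing. -/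
def tangencies {d : ℕ} (S : Finset (EuclideanSpace ℝ (Fin d))) : ℕ :=
  (S.offDiag.filter fun p => dist p.1 p.2 = 2).card / 2

/-!
Put the circles at the first `n` points, in row-major order, of the lattice `(2ℤ)²` filled by rows
of width `w = ⌈√n⌉`. Every tangent line of two lattice circles is a line `x = 2k + 1` or
`y = 2k + 1`, which no lattice circle crosses, so such a packing is totally separable. Each new
circle touches its left neighbour unless it starts a row, and the circle below unless it lies in
the bottom row, so the packing has `(n - h) + (n - w)` tangencies, where `h = ⌈n / w⌉` is the
number of rows. Finally `w + h = ⌈2√n⌉`, and `2n - ⌈2√n⌉ = ⌊2(n - √n)⌋`.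
-/

/-- `|⟪z - midpoint ℝ x y, x - y⟫| / dist x y` is the distance from `z` to the tangent line. -/
theorem tangentHyp_inter_ball_eq_empty {d : ℕ} {x y z : EuclideanSpace ℝ (Fin d)}
    (hxy : dist x y = 2) (hz : 2 ≤ |inner ℝ (z - midpoint ℝ x y) (x - y)|) :
    tangentHyp x y ∩ ball z 1 = ∅ := by
  refine Set.eq_empty_iff_forall_notMem.2 fun p ⟨hp, hpz⟩ => ?_
  have hshift : inner ℝ (z - midpoint ℝ x y) (x - y) = inner ℝ (z - p) (x - y) := by
    rw [← sub_add_sub_cancel z p, inner_add_left, hp, add_zero]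
  have hcs : |inner ℝ (z - p) (x - y)| ≤ dist z p * dist x y := by
    rw [dist_eq_norm, dist_eq_norm]; exact abs_real_inner_le_norm _ _
  rw [mem_ball'] at hpz
  rw [hshift] at hz
  nlinarith

theorem tangencies_insert {d : ℕ} {S : Finset (EuclideanSpace ℝ (Fin d))}
    {x : EuclideanSpace ℝ (Fin d)} (hx : x ∉ S) :
    tangencies (insert x S) = tangencies S + #{y ∈ S | dist x y = 2} := by
  have hleft : #(({x} ×ˢ S).filter fun p => dist p.1 p.2 = 2) = #{y ∈ S | dist x y = 2} := by
    rw [singleton_product, filter_map, card_map]; rfl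
  have hright : #((S ×ˢ {x}).filter fun p => dist p.1 p.2 = 2) = #{y ∈ S | dist x y = 2} := by
    rw [product_singleton, filter_map, card_map]
    exact congrArg card (filter_congr fun y _ => by
      change dist y x = 2 ↔ _
      rw [dist_comm])
  unfold tangencies
  rw [offDiag_insert hx, filter_union, filter_union, card_union_of_disjoint, card_union_of_disjoint,
    hleft, hright]
  · omega
  all_goals
    simp only [disjoint_left, mem_union, mem_filter, mem_offDiag, mem_product, mem_singleton]
    aesop

/-- The point `2u` of the lattice `(2ℤ)ᵈ`. -/
def latticePt {d : ℕ} (u : Fin d → ℤ) : EuclideanSpace ℝ (Fin d) :=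
  WithLp.toLp 2 fun i => 2 * (u i : ℝ)

section Lattice

variable {d : ℕ}

theorem inner_latticePt (u v : Fin d → ℤ) :
    inner ℝ (latticePt u) (latticePt v) = 4 * ((u ⬝ᵥ v : ℤ) : ℝ) := by
  simp only [latticePt, PiLp.inner_apply, RCLike.inner_apply, conj_trivial, dotProduct,
    Int.cast_sum, Int.cast_mul, Finset.mul_sum]
  exact Finset.sum_congr rfl fun i _ => by ring

theorem latticePt_sub (u v : Fin d → ℤ) : latticePt (u - v) = latticePt u - latticePt v := by
  ext i; simp [latticePt]; ring

theorem dist_latticePt_sq (u v : Fin d → ℤ) :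
    dist (latticePt u) (latticePt v) ^ 2 = 4 * (((u - v) ⬝ᵥ (u - v) : ℤ) : ℝ) := by
  rw [dist_eq_norm, ← real_inner_self_eq_norm_sq, ← latticePt_sub, inner_latticePt]

theorem dist_latticePt_eq_two_iff {u v : Fin d → ℤ} :
    dist (latticePt u) (latticePt v) = 2 ↔ (u - v) ⬝ᵥ (u - v) = 1 := by
  rw [← sq_eq_sq₀ dist_nonneg zero_le_two, dist_latticePt_sq]
  constructor <;> intro h
  · exact_mod_cast (by linarith : (((u - v) ⬝ᵥ (u - v) : ℤ) : ℝ) = 1)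
  · rw [h]; norm_num

theorem two_le_dist_latticePt {u v : Fin d → ℤ} (huv : u ≠ v) :
    2 ≤ dist (latticePt u) (latticePt v) := by
  have hpos : 0 < (u - v) ⬝ᵥ (u - v) :=
    lt_of_le_of_ne (Finset.sum_nonneg fun i _ => mul_self_nonneg (u i - v i))
      (fun h => huv (sub_eq_zero.1 (dotProduct_self_eq_zero.1 h.symm)))
  have hsq : (2 : ℝ) ^ 2 ≤ dist (latticePt u) (latticePt v) ^ 2 := by
    rw [dist_latticePt_sq]
    have : (1 : ℝ) ≤ (((u - v) ⬝ᵥ (u - v) : ℤ) : ℝ) := by exact_mod_cast hpos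
    linarith
  exact le_of_sq_le_sq hsq dist_nonneg

theorem latticePt_injective : Function.Injective (latticePt : (Fin d → ℤ) → _) := by
  intro u v h
  by_contra huv
  have := two_le_dist_latticePt huv
  rw [h, dist_self] at this
  norm_num at this

theorem inner_sub_midpoint_latticePt (t u v : Fin d → ℤ) :
    inner ℝ (latticePt t - midpoint ℝ (latticePt u) (latticePt v)) (latticePt u - latticePt v) =
      2 * ((((2 : ℤ) • t - u - v) ⬝ᵥ (u - v) : ℤ) : ℝ) := by
  simp only [latticePt, midpoint_eq_smul_add, PiLp.inner_apply, RCLike.inner_apply, conj_trivial,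
    dotProduct, Int.cast_sum, Finset.mul_sum, PiLp.sub_apply, PiLp.add_apply, PiLp.smul_apply,
    Pi.sub_apply, Pi.smul_apply, Int.cast_mul, Int.cast_sub, smul_eq_mul, invOf_eq_inv]
  exact Finset.sum_congr rfl fun i _ => by push_cast; ring

theorem isPacking_image_latticePt (A : Set (Fin d → ℤ)) : IsPacking (latticePt '' A) := by
  rintro _ ⟨u, -, rfl⟩ _ ⟨v, -, rfl⟩ hne
  exact two_le_dist_latticePt fun h => hne (congrArg latticePt h)

theorem totallySeparable_image_latticePt (A : Set (Fin d → ℤ)) :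
    TotallySeparable (latticePt '' A) := by
  rintro _ ⟨u, -, rfl⟩ _ ⟨v, -, rfl⟩ huv _ ⟨t, -, rfl⟩
  refine tangentHyp_inter_ball_eq_empty huv ?_
  rw [dist_latticePt_eq_two_iff] at huv
  have hodd : ((2 : ℤ) • t - u - v) ⬝ᵥ (u - v) = 2 * ((t - v) ⬝ᵥ (u - v)) - 1 := by
    rw [← huv]
    simp only [sub_dotProduct, smul_dotProduct, smul_eq_mul]
    ring
  rw [inner_sub_midpoint_latticePt, hodd, abs_mul, abs_two, ← Int.cast_abs]
  have : (1 : ℤ) ≤ |2 * ((t - v) ⬝ᵥ (u - v)) - 1| := Int.one_le_abs (by omega)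
  have : (1 : ℝ) ≤ ((|2 * ((t - v) ⬝ᵥ (u - v)) - 1| : ℤ) : ℝ) := by exact_mod_cast this
  linarith

end Lattice

theorem Int.sq_add_sq_eq_one_iff {x y : ℤ} :
    x ^ 2 + y ^ 2 = 1 ↔ (x = 0 ∧ (y = 1 ∨ y = -1)) ∨ (y = 0 ∧ (x = 1 ∨ x = -1)) := by
  constructor
  · intro h
    obtain ⟨hx₁, hx₂⟩ := abs_le.1 ((sq_le_one_iff_abs_le_one x).1 (by nlinarith [sq_nonneg y]))
    obtain ⟨hy₁, hy₂⟩ := abs_le.1 ((sq_le_one_iff_abs_le_one y).1 (by nlinarith [sq_nonneg x]))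
    interval_cases x <;> interval_cases y <;> simp_all
  · rintro (⟨rfl, rfl | rfl⟩ | ⟨rfl, rfl | rfl⟩) <;> norm_num

def gridIndex (w k : ℕ) : Fin 2 → ℤ := ![(k % w : ℕ), (k / w : ℕ)]

theorem gridIndex_injective {w : ℕ} : Function.Injective (gridIndex w) := by
  intro k l h
  have h0 := congrFun h 0
  have h1 := congrFun h 1
  simp only [gridIndex, Matrix.cons_val_zero, Matrix.cons_val_one, Nat.cast_inj] at h0 h1
  rw [← Nat.div_add_mod k w, h0, h1, Nat.div_add_mod]

theorem gridIndex_adjacent_iff {w k m : ℕ} (hw : 0 < w) (hkm : k < m) :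
    (gridIndex w m - gridIndex w k) ⬝ᵥ (gridIndex w m - gridIndex w k) = 1 ↔
      (k + 1 = m ∧ m % w ≠ 0) ∨ k + w = m := by
  have hk := Nat.div_add_mod k w
  have hm := Nat.div_add_mod m w
  have hb := Nat.mod_lt k hw
  have he := Nat.mod_lt m hw
  have hac : k / w ≤ m / w := Nat.div_le_div_right hkm.le
  simp only [dotProduct, Fin.sum_univ_two, gridIndex, Pi.sub_apply, Matrix.cons_val_zero,
    Matrix.cons_val_one, ← sq]
  rw [Int.sq_add_sq_eq_one_iff]
  generalize k / w = a, k % w = b, m / w = c, m % w = e at *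
  obtain rfl | rfl | hc : c = a ∨ c = a + 1 ∨ a + 2 ≤ c := by omega
  · omega
  · rw [mul_add, mul_one] at hm; omega
  · have := Nat.mul_le_mul_left w hc
    rw [mul_add] at this; omega

theorem card_filter_range_adjacent {w : ℕ} (hw : 0 < w) (m : ℕ) :
    #{k ∈ range m | (k + 1 = m ∧ m % w ≠ 0) ∨ k + w = m} =
      (if m % w = 0 then 0 else 1) + (if w ≤ m then 1 else 0) := by
  have h0 : m = 0 → m % w = 0 := fun h => h ▸ Nat.zero_mod w
  have h1 : w = 1 → m % w = 0 := fun h => h ▸ Nat.mod_one m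
  split_ifs with hdvd hwm hwm <;> simp only [zero_add, add_zero, Nat.reduceAdd]
  · rw [card_eq_one]; refine ⟨m - w, ?_⟩; ext k; simp; omega
  · rw [card_eq_zero, filter_eq_empty_iff]; intro k hk; simp at hk; omega
  · rw [card_eq_two]; refine ⟨m - 1, m - w, by omega, ?_⟩; ext k; simp; omega
  · rw [card_eq_one]; refine ⟨m - 1, ?_⟩; ext k; simp; omega

def gridPacking (w n : ℕ) : Finset (EuclideanSpace ℝ (Fin 2)) :=
  (range n).image (latticePt ∘ gridIndex w)

theorem tangencies_gridPacking {w : ℕ} (hw : 0 < w) (n : ℕ) :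
    tangencies (gridPacking w n) = #{m ∈ range n | m % w ≠ 0} + (n - w) := by
  have hinj : Function.Injective (latticePt ∘ gridIndex w) :=
    latticePt_injective.comp gridIndex_injective
  induction n with
  | zero => simp [gridPacking, tangencies]
  | succ m ih =>
    have hstep : gridPacking w (m + 1) = insert ((latticePt ∘ gridIndex w) m) (gridPacking w m) := by
      rw [gridPacking, gridPacking, range_add_one, image_insert]
    have hnew : (latticePt ∘ gridIndex w) m ∉ gridPacking w m := by
      rw [gridPacking, mem_image]
      rintro ⟨k, hk, heq⟩
      exact (mem_range.1 hk).ne (hinj heq)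
    have hneighbors : #{y ∈ gridPacking w m | dist ((latticePt ∘ gridIndex w) m) y = 2} =
        #{k ∈ range m | (k + 1 = m ∧ m % w ≠ 0) ∨ k + w = m} := by
      rw [gridPacking, filter_image, card_image_of_injective _ hinj]
      refine congrArg card (filter_congr fun k hk => ?_)
      rw [Function.comp_apply, Function.comp_apply, dist_latticePt_eq_two_iff,
        gridIndex_adjacent_iff hw (mem_range.1 hk)]
    rw [hstep, tangencies_insert hnew, ih, hneighbors, card_filter_range_adjacent hw,
      range_add_one, filter_insert]
    split_ifs <;> simp_all <;> omega

theorem card_filter_range_succ_mod_ne_zero (w N : ℕ) :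
    #{m ∈ range (N + 1) | m % w ≠ 0} = N - N / w := by
  have hsplit := card_filter_add_card_filter_not (s := range N) (fun e => w ∣ e + 1)
  rw [Nat.card_multiples, card_range] at hsplit
  rw [show N - N / w = #{e ∈ range N | ¬ w ∣ e + 1} by omega, range_add_one', filter_insert,
    if_neg (by simp), filter_map, card_map]
  exact congrArg card (filter_congr fun e _ => by rw [Nat.dvd_iff_mod_eq_zero]; rfl)

theorem ceil_two_mul_sqrt_eq {n m : ℕ} (h₁ : m ^ 2 < 4 * n) (h₂ : 4 * n ≤ (m + 1) ^ 2) :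
    ⌈2 * √(n : ℝ)⌉ = m + 1 := by
  have htwo : 2 * √(n : ℝ) = √(4 * n) := by
    rw [Real.sqrt_mul zero_le_four, show (4 : ℝ) = 2 ^ 2 by norm_num, Real.sqrt_sq zero_le_two]
  rw [Int.ceil_eq_iff, htwo]
  push_cast
  constructor
  · rw [add_sub_cancel_right, Real.lt_sqrt (Nat.cast_nonneg m)]
    exact_mod_cast h₁
  · rw [Real.sqrt_le_left (by positivity)]
    exact_mod_cast h₂

theorem floor_two_mul_natCast_sub (n : ℕ) (x : ℝ) : ⌊2 * ((n : ℝ) - x)⌋ = 2 * n - ⌈2 * x⌉ := by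
  rw [mul_sub, sub_eq_add_neg, show (2 : ℝ) * n = ((2 * n : ℤ) : ℝ) by push_cast; ring,
    Int.floor_intCast_add, Int.floor_neg, sub_eq_add_neg]

/-- `w + (N / w + 1) = ⌈2√(N + 1)⌉` for `w = ⌈√(N + 1)⌉`; here `N / w + 1` is the number of
rows of width `w` filled by `N + 1` cells. -/
theorem sqrt_add_div_sqrt_bounds {N w : ℕ} (hw : w = Nat.sqrt N + 1) :
    (w + N / w) ^ 2 < 4 * (N + 1) ∧ 4 * (N + 1) ≤ (w + N / w + 1) ^ 2 := by
  have hlow : (w - 1) * (w - 1) ≤ N := by rw [hw]; exact Nat.sqrt_le N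
  have hhigh : N < w * w := by rw [hw]; exact Nat.lt_succ_sqrt N
  have hdiv := Nat.div_add_mod N w
  have hmod : N % w < w := Nat.mod_lt N (by omega)
  generalize N / w = q, N % w = r at *
  have hw1 : 1 ≤ w := by omega
  zify [hw1] at *
  constructor
  · have hqw : q < w := by nlinarith
    rcases (by omega : q + 1 = w ∨ q + 2 ≤ w) with hq | hq <;> nlinarith
  · nlinarith [sq_nonneg ((w : ℤ) - q - 1)]

theorem stmt2 (n : ℕ) :
    ∃ S : Finset (EuclideanSpace ℝ (Fin 2)), S.card = n ∧ IsPacking ((S : Finset (EuclideanSpace ℝ (Fin 2))) : Set (EuclideanSpace ℝ (Fin 2))) ∧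
      TotallySeparable ((S : Finset (EuclideanSpace ℝ (Fin 2))) : Set (EuclideanSpace ℝ (Fin 2))) ∧ (tangencies S : ℤ) = ⌊2 * ((n : ℝ) - Real.sqrt n)⌋ := by
  obtain ⟨w, hw⟩ : ∃ w, w = Nat.sqrt (n - 1) + 1 := ⟨_, rfl⟩
  have hinj : Function.Injective (latticePt ∘ gridIndex w) :=
    latticePt_injective.comp gridIndex_injective
  refine ⟨gridPacking w n, ?_, ?_, ?_, ?_⟩
  · rw [gridPacking, card_image_of_injective _ hinj, card_range]
  · rw [gridPacking, coe_image, Set.image_comp]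
    exact isPacking_image_latticePt _
  · rw [gridPacking, coe_image, Set.image_comp]
    exact totallySeparable_image_latticePt _
  rw [tangencies_gridPacking (by omega)]
  cases n with
  | zero => simp
  | succ N =>
    rw [Nat.add_sub_cancel] at hw
    obtain ⟨h₁, h₂⟩ := sqrt_add_div_sqrt_bounds hw
    have hwN : w ≤ N + 1 := hw ▸ Nat.succ_le_succ (Nat.sqrt_le_self N)
    have hq : N / w ≤ N := Nat.div_le_self N w
    rw [card_filter_range_succ_mod_ne_zero, floor_two_mul_natCast_sub, ceil_two_mul_sqrt_eq h₁ h₂]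
    push_cast
    omega
end
end

section
/- In the contact graph of a totally separable packing of unit spheres in ℝ^d (d ≥ 2), there is no triangle: no three centers are pairwise at distance 2. -/
open EuclideanSpace Metric Finset
open scoped Classical

noncomputable section

/-! A center equidistant from two touching centers lies on their tangent hyperplane, which
is the perpendicular bisector of the pair; its own ball then meets that hyperplane. -/

section

variable {d : ℕ}

theorem tangentHyp_eq_perpBisector (x y : EuclideanSpace ℝ (Fin d)) :
    tangentHyp x y = AffineSubspace.perpBisector x y := by
  ext p
  rw [AffineSubspace.mem_coe, AffineSubspace.mem_perpBisector_iff_inner_eq_zero, vsub_eq_sub,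
    vsub_eq_sub, ← neg_sub x y, inner_neg_right, neg_eq_zero]
  rfl

theorem mem_tangentHyp_iff_dist_eq {x y p : EuclideanSpace ℝ (Fin d)} :
    p ∈ tangentHyp x y ↔ dist p x = dist p y := by
  rw [tangentHyp_eq_perpBisector, AffineSubspace.mem_coe,
    AffineSubspace.mem_perpBisector_iff_dist_eq]

theorem TotallySeparable.dist_ne_of_dist_eq_two {S : Set (EuclideanSpace ℝ (Fin d))}
    (hsep : TotallySeparable S) {x y z : EuclideanSpace ℝ (Fin d)} (hx : x ∈ S) (hy : y ∈ S)
    (hxy : dist x y = 2) (hz : z ∈ S) : dist z x ≠ dist z y := fun hzxy =>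
  (Set.eq_empty_iff_forall_notMem.mp (hsep x hx y hy hxy z hz)) z
    ⟨mem_tangentHyp_iff_dist_eq.mpr hzxy, mem_ball_self one_pos⟩

end

theorem stmt4_general (d : ℕ) (S : Set (EuclideanSpace ℝ (Fin d)))
    (hsep : TotallySeparable S) :
    ¬ ∃ x ∈ S, ∃ y ∈ S, ∃ z ∈ S, x ≠ y ∧ y ≠ z ∧ x ≠ z ∧
      dist x y = 2 ∧ dist y z = 2 ∧ dist x z = 2 := by
  rintro ⟨x, hx, y, hy, z, hz, -, -, -, hxy, hyz, hxz⟩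
  exact hsep.dist_ne_of_dist_eq_two hx hy hxy hz (by rw [dist_comm z x, dist_comm z y, hxz, hyz])

theorem stmt4 (d : ℕ) (hd : 2 ≤ d) (S : Set (EuclideanSpace ℝ (Fin d)))
    (hpack : IsPacking S) (hsep : TotallySeparable S) :
    ¬ ∃ x ∈ S, ∃ y ∈ S, ∃ z ∈ S, x ≠ y ∧ y ≠ z ∧ x ≠ z ∧
      dist x y = 2 ∧ dist y z = 2 ∧ dist x z = 2 :=
  stmt4_general d S hsep
end
end

section
/- For n = k^d with k ∈ ℕ, k ≥ 1, the packing of unit spheres centered at {0, 2, 4, …, 2(k−1)}^d ⊆ ℝ^d is totally separable and has exactly d·k^(d−1)·(k−1) = d(n − n^((d−1)/d)) tangencies. -/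
/-!
Two points of `2ℤ^d` lie at distance `2√N` with `N` a nonnegative integer, so distinct centers
are at distance at least 2, with equality exactly when they differ by `±2` in one coordinate `j`.
The tangent hyperplane of such a pair is `{x | x j = m}` with `m` odd, hence at distance at least 1
from every center, whose coordinates are even. An ordered tangent pair is determined by the
direction `j`, an ordered pair of consecutive values in that coordinate (`2(k-1)` choices) and a
common value in each of the other `d-1` coordinates (`k^(d-1)` choices).
-/

open EuclideanSpace Metric Finset
open scoped Classical

noncomputable section

section IntegerVectors

variable {ι : Type*} [Fintype ι]

theorem one_le_sum_sq_of_ne_zero {w : ι → ℤ} (hw : w ≠ 0) : 1 ≤ ∑ i, w i ^ 2 := by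
  obtain ⟨j, hj⟩ := Function.ne_iff.mp hw
  have hj1 : 1 ≤ w j ^ 2 := by have := sq_pos_of_ne_zero hj; omega
  exact hj1.trans (single_le_sum (fun i _ => sq_nonneg (w i)) (mem_univ j))

theorem sum_sq_eq_one_iff (w : ι → ℤ) :
    ∑ i, w i ^ 2 = 1 ↔ ∃ j, w j ^ 2 = 1 ∧ ∀ i ≠ j, w i = 0 := by
  constructor
  · intro h
    obtain ⟨j, -, hj⟩ := exists_ne_zero_of_sum_ne_zero (h.trans_ne one_ne_zero)
    have hsplit := add_sum_erase univ (fun i => w i ^ 2) (mem_univ j)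
    have hrest : 0 ≤ ∑ i ∈ univ.erase j, w i ^ 2 := sum_nonneg fun i _ => sq_nonneg (w i)
    have hj1 : 1 ≤ w j ^ 2 := by have := sq_nonneg (w j); omega
    refine ⟨j, by linarith, fun i hi => pow_eq_zero_iff two_ne_zero |>.mp ?_⟩
    exact (sum_eq_zero_iff_of_nonneg fun i _ => sq_nonneg (w i)).mp (by linarith) i
      (mem_erase.mpr ⟨hi, mem_univ i⟩)
  · rintro ⟨j, hj, hrest⟩
    rw [sum_eq_single j (fun i _ hi => by simp [hrest i hi]) (by simp), hj]

end IntegerVectors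

section EvenLattice

variable {ι : Type*}

def evenLatticePoint (v : ι → ℤ) : EuclideanSpace ℝ ι :=
  WithLp.toLp 2 fun i => 2 * (v i : ℝ)

@[simp]
theorem evenLatticePoint_apply (v : ι → ℤ) (i : ι) :
    evenLatticePoint v i = 2 * (v i : ℝ) :=
  rfl

theorem evenLatticePoint_injective : Function.Injective (evenLatticePoint : (ι → ℤ) → _) :=
  fun u v h => funext fun i => by simpa using congrArg (· i) h

theorem dist_evenLatticePoint [Fintype ι] (u v : ι → ℤ) :
    dist (evenLatticePoint u) (evenLatticePoint v) =
      2 * √((∑ i, (u i - v i) ^ 2 : ℤ) : ℝ) := by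
  have h4 : √(4 : ℝ) = 2 := by
    rw [show (4 : ℝ) = 2 ^ 2 by norm_num, Real.sqrt_sq zero_le_two]
  rw [EuclideanSpace.dist_eq, ← h4, ← Real.sqrt_mul zero_le_four]
  push_cast
  rw [mul_sum]
  congr 1
  refine sum_congr rfl fun i _ => ?_
  rw [evenLatticePoint_apply, evenLatticePoint_apply, Real.dist_eq, sq_abs]
  ring

theorem two_le_dist_evenLatticePoint [Fintype ι] {u v : ι → ℤ} (h : u ≠ v) :
    2 ≤ dist (evenLatticePoint u) (evenLatticePoint v) := by
  have h1 : (1 : ℝ) ≤ ((∑ i, (u i - v i) ^ 2 : ℤ) : ℝ) :=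
    mod_cast one_le_sum_sq_of_ne_zero (w := u - v) (sub_ne_zero.mpr h)
  rw [dist_evenLatticePoint]
  nlinarith [Real.one_le_sqrt.mpr h1]

theorem dist_evenLatticePoint_eq_two_iff [Fintype ι] (u v : ι → ℤ) :
    dist (evenLatticePoint u) (evenLatticePoint v) = 2 ↔ ∑ i, (u i - v i) ^ 2 = 1 := by
  rw [dist_evenLatticePoint, mul_eq_left₀ two_ne_zero, Real.sqrt_eq_one, Int.cast_eq_one]

end EvenLattice

theorem IsPacking.mono {d : ℕ} {S T : Set (EuclideanSpace ℝ (Fin d))} (hT : IsPacking T)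
    (hST : S ⊆ T) : IsPacking S :=
  Set.Pairwise.mono hST hT

theorem TotallySeparable.mono {d : ℕ} {S T : Set (EuclideanSpace ℝ (Fin d))}
    (hT : TotallySeparable T) (hST : S ⊆ T) : TotallySeparable S :=
  fun x hx y hy hxy z hz => hT x (hST hx) y (hST hy) hxy z (hST hz)

section EvenLatticePacking

variable {d : ℕ}

theorem isPacking_range_evenLatticePoint :
    IsPacking (Set.range (evenLatticePoint : (Fin d → ℤ) → _)) := by
  rintro _ ⟨u, rfl⟩ _ ⟨v, rfl⟩ h
  exact two_le_dist_evenLatticePoint fun huv => h (congrArg _ huv)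

theorem apply_eq_of_mem_tangentHyp {u v : Fin d → ℤ} {j : Fin d} (hj : u j ≠ v j)
    (hoff : ∀ i ≠ j, u i = v i) {p : EuclideanSpace ℝ (Fin d)}
    (hp : p ∈ tangentHyp (evenLatticePoint u) (evenLatticePoint v)) :
    p j = u j + v j := by
  have hinner : inner ℝ (p - midpoint ℝ (evenLatticePoint u) (evenLatticePoint v))
      (evenLatticePoint u - evenLatticePoint v) = (p j - (u j + v j)) * (2 * (u j - v j)) := by
    rw [PiLp.inner_apply, sum_eq_single j (fun i _ hi => by simp [hoff i hi]) (by simp)]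
    simp [midpoint_eq_smul_add]
    ring
  have hne : (2 * (u j - v j) : ℝ) ≠ 0 :=
    mul_ne_zero two_ne_zero (sub_ne_zero.mpr (by exact_mod_cast hj))
  rw [tangentHyp, Set.mem_ofPred_eq, hinner] at hp
  linarith [(mul_eq_zero.mp hp).resolve_right hne]

theorem totallySeparable_range_evenLatticePoint :
    TotallySeparable (Set.range (evenLatticePoint : (Fin d → ℤ) → _)) := by
  rintro _ ⟨u, rfl⟩ _ ⟨v, rfl⟩ huv _ ⟨w, rfl⟩
  obtain ⟨j, hj, hoff⟩ := (sum_sq_eq_one_iff (u - v)).mp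
    ((dist_evenLatticePoint_eq_two_iff u v).mp huv)
  refine Set.eq_empty_of_forall_notMem fun p ⟨hp, hpw⟩ => ?_
  have hoff' : ∀ i ≠ j, u i = v i := fun i hi => sub_eq_zero.mp (hoff i hi)
  have hpj := apply_eq_of_mem_tangentHyp (fun h => by simp [h] at hj) hoff' hp
  have hodd : 1 ≤ |u j + v j - 2 * w j| := by
    refine Int.one_le_abs fun h => ?_
    rcases sq_eq_one_iff.mp hj with h1 | h1 <;> simp only [Pi.sub_apply] at h1 <;> omega
  have hcoord : (1 : ℝ) ≤ |p j - evenLatticePoint w j| := by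
    have := (Int.cast_le (R := ℝ)).mpr hodd
    push_cast at this
    rwa [hpj, evenLatticePoint_apply]
  have := PiLp.dist_apply_le p (evenLatticePoint w) j
  rw [Real.dist_eq] at this
  exact absurd (mem_ball.mp hpw) (by linarith)

end EvenLatticePacking

theorem card_filter_exists_apply_mem_forall_ne {ι β : Type*} [Fintype ι] [DecidableEq ι]
    [Fintype β] (A D : Finset β)
    [DecidablePred fun h : ι → β => ∃ j, h j ∈ A ∧ ∀ i ≠ j, h i ∈ D]
    (hAD : Disjoint A D) :
    #{h : ι → β | ∃ j, h j ∈ A ∧ ∀ i ≠ j, h i ∈ D} =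
      Fintype.card ι * #A * #D ^ (Fintype.card ι - 1) := by
  have hunion : ({h | ∃ j, h j ∈ A ∧ ∀ i ≠ j, h i ∈ D} : Finset (ι → β)) =
      univ.biUnion fun j => Fintype.piFinset (Function.update (fun _ => D) j A) := by
    ext h
    simp only [mem_filter, mem_univ, true_and, mem_biUnion, Fintype.mem_piFinset]
    refine exists_congr fun j => ⟨fun ⟨hj, hi⟩ i => ?_, fun h' => ⟨?_, fun i hi => ?_⟩⟩
    · rcases eq_or_ne i j with rfl | hij
      · simpa using hj
      · simpa [hij] using hi i hij
    · simpa using h' j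
    · simpa [hi] using h' i
  rw [hunion, card_biUnion]
  · simp only [Fintype.card_piFinset]
    have hprod (j : ι) : ∏ i, #(Function.update (fun _ => D) j A i) =
        #A * #D ^ (Fintype.card ι - 1) := by
      rw [Fintype.prod_eq_mul_prod_compl j, Function.update_self,
        prod_congr rfl fun i hi => by rw [Function.update_of_ne (by simpa using hi)],
        prod_const, card_compl, card_singleton]
    simp only [hprod, sum_const, card_univ, smul_eq_mul, mul_assoc]
  · intro j _ j' _ hjj'
    refine disjoint_left.mpr fun h hj hj' => hAD.notMem_of_mem_left_finset (a := h j) ?_ ?_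
    · simpa using Fintype.mem_piFinset.mp hj j
    · simpa [hjj'] using Fintype.mem_piFinset.mp hj' j

theorem card_filter_val_eq_val_add_one (k : ℕ) :
    #{q : Fin k × Fin k | (q.1 : ℕ) = q.2 + 1} = k - 1 := by
  calc _ = #{b : Fin k | (b : ℕ) < k - 1} := by
        refine card_nbij' Prod.snd (fun b => (⟨(b + 1) % k, Nat.mod_lt _ b.pos⟩, b))
          (fun q hq => ?_) (fun b hb => ?_) (fun q hq => ?_) (fun b _ => rfl)
        · simp only [coe_filter, mem_univ, true_and, Set.mem_ofPred_eq] at hq ⊢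
          omega
        · simp only [coe_filter, mem_univ, true_and, Set.mem_ofPred_eq] at hb ⊢
          rw [Nat.mod_eq_of_lt (by omega)]
        · simp only [coe_filter, mem_univ, true_and, Set.mem_ofPred_eq] at hq
          ext <;> simp [hq, Nat.mod_eq_of_lt (hq ▸ q.1.isLt)]
    _ = k - 1 := by rw [Fin.card_filter_val_lt]; omega

theorem card_filter_sq_sub_eq_one (k : ℕ) :
    #{q : Fin k × Fin k | (((q.1 : ℕ) : ℤ) - (q.2 : ℕ)) ^ 2 = 1} = 2 * (k - 1) := by
  have hswap : #{q : Fin k × Fin k | (q.2 : ℕ) = q.1 + 1} =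
      #{q : Fin k × Fin k | (q.1 : ℕ) = q.2 + 1} :=
    card_nbij' Prod.swap Prod.swap (fun q hq => by simpa using hq) (fun q hq => by simpa using hq)
      (fun q _ => rfl) (fun q _ => rfl)
  rw [filter_congr (q := fun q => (q.1 : ℕ) = q.2 + 1 ∨ (q.2 : ℕ) = q.1 + 1)
      (fun q _ => by rw [sq_eq_one_iff]; omega), filter_or,
    card_union_of_disjoint (disjoint_filter.mpr fun q _ h => by omega), hswap,
    card_filter_val_eq_val_add_one]
  omega

theorem card_filter_offDiag_image {α β : Type*} [Fintype α] [DecidableEq β] {e : α → β}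
    (he : Function.Injective e) (r : β → β → Prop) (hr : ∀ x, ¬ r x x) :
    #{p ∈ (univ.image e).offDiag | r p.1 p.2} = #{p : α × α | r (e p.1) (e p.2)} := by
  rw [← card_image_of_injective _ (he.prodMap he)]
  congr 1
  ext ⟨x, y⟩
  simp only [mem_filter, mem_offDiag, mem_image, mem_univ, true_and, Prod.exists, Prod.map,
    Prod.mk.injEq]
  constructor
  · rintro ⟨⟨⟨a, rfl⟩, ⟨b, rfl⟩, -⟩, h⟩
    exact ⟨a, b, h, rfl, rfl⟩
  · rintro ⟨a, b, h, rfl, rfl⟩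
    exact ⟨⟨⟨a, rfl⟩, ⟨b, rfl⟩, fun hab => hr _ (hab ▸ h)⟩, h⟩

section Grid

variable {d k : ℕ}

def gridPoint (f : Fin d → Fin k) : EuclideanSpace ℝ (Fin d) :=
  evenLatticePoint fun i => ((f i : ℕ) : ℤ)

theorem gridPoint_injective : Function.Injective (gridPoint : (Fin d → Fin k) → _) :=
  fun f g h => funext fun i => Fin.ext <| by
    simpa using congrFun (evenLatticePoint_injective h) i

theorem card_filter_dist_gridPoint_eq_two :
    #{p : (Fin d → Fin k) × (Fin d → Fin k) | dist (gridPoint p.1) (gridPoint p.2) = 2} =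
      d * (2 * (k - 1)) * k ^ (d - 1) := by
  let A : Finset (Fin k × Fin k) := {q | (((q.1 : ℕ) : ℤ) - (q.2 : ℕ)) ^ 2 = 1}
  have hdisj : Disjoint A (univ : Finset (Fin k)).diag :=
    disjoint_left.mpr fun q hq hdiag => by
      rw [mem_diag] at hdiag
      simp [A, hdiag.2] at hq
  calc _ = #{h : Fin d → Fin k × Fin k |
        ∃ j, h j ∈ A ∧ ∀ i ≠ j, h i ∈ (univ : Finset (Fin k)).diag} := by
        refine card_equiv (Equiv.arrowProdEquivProdArrow _ _ _).symm fun p => ?_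
        simp [A, gridPoint, dist_evenLatticePoint_eq_two_iff, sum_sq_eq_one_iff, sub_eq_zero,
          Fin.val_inj]
    _ = _ := by
      refine (card_filter_exists_apply_mem_forall_ne (ι := Fin d) _ _ hdisj).trans ?_
      rw [Fintype.card_fin, card_filter_sq_sub_eq_one, diag_card, card_univ, Fintype.card_fin]

end Grid

theorem mul_pow_sub_one_mul_sub_one_eq_mul_sub_rpow (d k : ℕ) :
    (d * k ^ (d - 1) * (k - 1) : ℝ) =
      d * (((k ^ d : ℕ) : ℝ) - ((k ^ d : ℕ) : ℝ) ^ (((d : ℝ) - 1) / (d : ℝ))) := by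
  rcases d with _ | d
  · simp
  have hexp : ((d + 1 : ℕ) : ℝ) * (((d + 1 : ℕ) - 1) / (d + 1 : ℕ)) = d := by
    field_simp
    push_cast
    ring
  rw [Nat.cast_pow, ← Real.rpow_natCast (k : ℝ) (d + 1), ← Real.rpow_mul (Nat.cast_nonneg k),
    hexp, Real.rpow_natCast, Real.rpow_natCast, Nat.add_sub_cancel, pow_succ]
  ring

theorem stmt7_general (d k : ℕ)
    (S : Finset (EuclideanSpace ℝ (Fin d)))
    (hS : S = (Finset.univ : Finset (Fin d → Fin k)).image fun f =>
      (WithLp.equiv 2 (Fin d → ℝ)).symm fun i => 2 * ((f i : ℕ) : ℝ)) :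
    S.card = k ^ d ∧ IsPacking ((S : Finset (EuclideanSpace ℝ (Fin d))) : Set (EuclideanSpace ℝ (Fin d))) ∧ TotallySeparable ((S : Finset (EuclideanSpace ℝ (Fin d))) : Set (EuclideanSpace ℝ (Fin d))) ∧
      tangencies S = d * k ^ (d - 1) * (k - 1) ∧
      (d * k ^ (d - 1) * (k - 1) : ℝ) =
        d * (((k ^ d : ℕ) : ℝ) - ((k ^ d : ℕ) : ℝ) ^ (((d : ℝ) - 1) / (d : ℝ))) := by
  obtain rfl : S = univ.image gridPoint := by
    rw [hS]
    congr! with f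
  have hsub : SetLike.coe (univ.image (gridPoint (d := d) (k := k))) ⊆
      Set.range evenLatticePoint := by
    rw [coe_image]
    exact (Set.image_subset_range _ _).trans (Set.range_comp_subset_range _ _)
  refine ⟨?_, isPacking_range_evenLatticePoint.mono hsub,
    totallySeparable_range_evenLatticePoint.mono hsub, ?_,
    mul_pow_sub_one_mul_sub_one_eq_mul_sub_rpow d k⟩
  · rw [card_image_of_injective _ gridPoint_injective, card_univ, Fintype.card_fun,
      Fintype.card_fin, Fintype.card_fin]
  · rw [tangencies, card_filter_offDiag_image gridPoint_injective (fun x y => dist x y = 2)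
        (by simp),
      card_filter_dist_gridPoint_eq_two,
      show d * (2 * (k - 1)) * k ^ (d - 1) = 2 * (d * k ^ (d - 1) * (k - 1)) by ring,
      Nat.mul_div_cancel_left _ two_pos]

theorem stmt7 (d k : ℕ) (hd : 1 ≤ d) (hk : 1 ≤ k)
    (S : Finset (EuclideanSpace ℝ (Fin d)))
    (hS : S = (Finset.univ : Finset (Fin d → Fin k)).image fun f =>
      (WithLp.equiv 2 (Fin d → ℝ)).symm fun i => 2 * ((f i : ℕ) : ℝ)) :
    S.card = k ^ d ∧ IsPacking ((S : Finset (EuclideanSpace ℝ (Fin d))) : Set (EuclideanSpace ℝ (Fin d))) ∧ TotallySeparable ((S : Finset (EuclideanSpace ℝ (Fin d))) : Set (EuclideanSpace ℝ (Fin d))) ∧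
      tangencies S = d * k ^ (d - 1) * (k - 1) ∧
      (d * k ^ (d - 1) * (k - 1) : ℝ) =
        d * (((k ^ d : ℕ) : ℝ) - ((k ^ d : ℕ) : ℝ) ^ (((d : ℝ) - 1) / (d : ℝ))) :=
  stmt7_general d k S hS
end
end
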